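/- arXiv:2203.10390 — 4 statements merged into one kernel-verified Lean document; each statement's English description precedes it below -/
import Mathlib

section
/- In any feasible schedule of a job system, for all real numbers s and e with s ≤ e, the sum of the lengths B_j over all jobs j whose release time satisfies s ≤ r_j and whose deadline satisfies d_j ≤ e is at most e − s (the demand of the interval [s, e] never exceeds its length). -/
/-! The execution intervals of the jobs counted in the demand of `[s, e]` are pairwise disjoint
subintervals of `[s, e)`, so additivity and monotonicity of Lebesgue measure bound their total
length by `e - s`. -/

open MeasureTheory Set

section DisjointIntervals

variable {ι : Type*} {t : Finset ι} {a b : ι → ℝ} {x y : ℝ}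

theorem sum_ofReal_sub_le_of_pairwiseDisjoint_Ico
    (hdisj : (t : Set ι).PairwiseDisjoint fun j => Ico (a j) (b j))
    (hsub : ∀ j ∈ t, Ico (a j) (b j) ⊆ Ico x y) :
    ∑ j ∈ t, ENNReal.ofReal (b j - a j) ≤ ENNReal.ofReal (y - x) :=
  calc ∑ j ∈ t, ENNReal.ofReal (b j - a j)
      = ∑ j ∈ t, volume (Ico (a j) (b j)) := by simp only [Real.volume_Ico]
    _ = volume (⋃ j ∈ t, Ico (a j) (b j)) :=
      (measure_biUnion_finset hdisj fun _ _ => measurableSet_Ico).symm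
    _ ≤ volume (Ico x y) := measure_mono (iUnion₂_subset hsub)
    _ = ENNReal.ofReal (y - x) := Real.volume_Ico

theorem sum_sub_le_of_pairwiseDisjoint_Ico (hxy : x ≤ y)
    (hdisj : (t : Set ι).PairwiseDisjoint fun j => Ico (a j) (b j))
    (hsub : ∀ j ∈ t, Ico (a j) (b j) ⊆ Ico x y) :
    ∑ j ∈ t, (b j - a j) ≤ y - x :=
  calc ∑ j ∈ t, (b j - a j)
      ≤ ∑ j ∈ t, max (b j - a j) 0 := Finset.sum_le_sum fun _ _ => le_max_left _ _
    _ = (∑ j ∈ t, ENNReal.ofReal (b j - a j)).toReal := by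
      rw [ENNReal.toReal_sum fun _ _ => ENNReal.ofReal_ne_top]
      simp only [ENNReal.toReal_ofReal']
    _ ≤ (ENNReal.ofReal (y - x)).toReal :=
      ENNReal.toReal_mono ENNReal.ofReal_ne_top
        (sum_ofReal_sub_le_of_pairwiseDisjoint_Ico hdisj hsub)
    _ = y - x := ENNReal.toReal_ofReal (sub_nonneg.2 hxy)

end DisjointIntervals

theorem demand_le_interval_length_general
    {ι : Type*} [Fintype ι]
    (r d B sched : ι → ℝ)
    (hrel : ∀ j, r j ≤ sched j)
    (hdl : ∀ j, sched j + B j ≤ d j)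
    (hdisj : ∀ j k, j ≠ k →
      Disjoint (Set.Ico (sched j) (sched j + B j))
               (Set.Ico (sched k) (sched k + B k)))
    (s e : ℝ) (hse : s ≤ e) :
    ∑ j ∈ Finset.univ.filter (fun j => s ≤ r j ∧ d j ≤ e), B j ≤ e - s := by
  have hsub : ∀ j ∈ Finset.univ.filter (fun j => s ≤ r j ∧ d j ≤ e),
      Ico (sched j) (sched j + B j) ⊆ Ico s e := fun j hj => by
    obtain ⟨hs, he⟩ := (Finset.mem_filter.1 hj).2
    exact Ico_subset_Ico (hs.trans (hrel j)) ((hdl j).trans he)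
  simpa only [add_sub_cancel_left] using
    sum_sub_le_of_pairwiseDisjoint_Ico hse (fun j _ k _ hjk => hdisj j k hjk) hsub

/-- **Interval-demand condition.**
In any feasible schedule of a job system (jobs `j` with release time `r j`,
deadline `d j`, length `B j > 0`; start times `sched j` satisfying
`r j ≤ sched j`, `sched j + B j ≤ d j`, with pairwise disjoint execution
intervals `[sched j, sched j + B j)`), for all reals `s ≤ e`, the sum of the
lengths `B j` over all jobs `j` with `s ≤ r j` and `d j ≤ e` is at most
`e - s`. -/
theorem demand_le_interval_length
    {ι : Type*} [Fintype ι]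
    (r d B sched : ι → ℝ)
    (hB : ∀ j, 0 < B j)
    (hrel : ∀ j, r j ≤ sched j)
    (hdl : ∀ j, sched j + B j ≤ d j)
    (hdisj : ∀ j k, j ≠ k →
      Disjoint (Set.Ico (sched j) (sched j + B j))
               (Set.Ico (sched k) (sched k + B k)))
    (s e : ℝ) (hse : s ≤ e) :
    ∑ j ∈ Finset.univ.filter (fun j => s ≤ r j ∧ d j ≤ e), B j ≤ e - s :=
  demand_le_interval_length_general r d B sched hrel hdl hdisj s e hse
end

section
/- Soundness of the idle-time insertion rule: let t, s, e be real numbers, let J be a job with [s, e] ⊆ [t, d_J], and let D be the sum of the lengths B_j over all jobs j ≠ J with s ≤ r_j and d_j ≤ e. If D > 0 and t + B_J + D > e, then in every feasible schedule of the job system in which J starts no earlier than t (s_J ≥ t), the start time of J satisfies s_J ≥ s. Hence deferring the release time of J from t to s excludes no feasible schedule among those starting J at or after t. -/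
open MeasureTheory Set

theorem sum_le_of_pairwiseDisjoint_Ico_subset {ι : Type*} (F : Finset ι) (x l : ι → ℝ)
    (a b : ℝ) (hl : ∀ j ∈ F, 0 ≤ l j)
    (hdisj : (F : Set ι).PairwiseDisjoint fun j => Ico (x j) (x j + l j))
    (hsub : ∀ j ∈ F, Ico (x j) (x j + l j) ⊆ Ico a b) :
    ∑ j ∈ F, l j ≤ max (b - a) 0 := by
  have hvol : ENNReal.ofReal (∑ j ∈ F, l j) ≤ ENNReal.ofReal (b - a) :=
    calc ENNReal.ofReal (∑ j ∈ F, l j)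
        = ∑ j ∈ F, volume (Ico (x j) (x j + l j)) := by
          rw [ENNReal.ofReal_sum_of_nonneg hl]
          simp only [Real.volume_Ico, add_sub_cancel_left]
      _ = volume (⋃ j ∈ F, Ico (x j) (x j + l j)) :=
          (measure_biUnion_finset hdisj fun _ _ => measurableSet_Ico).symm
      _ ≤ volume (Ico a b) := measure_mono (iUnion₂_subset hsub)
      _ = ENNReal.ofReal (b - a) := Real.volume_Ico
  rcases ENNReal.ofReal_le_ofReal_iff'.mp hvol with h | h
  · exact le_max_of_le_left h
  · exact le_max_of_le_right h

theorem add_le_of_le_of_disjoint_Ico {x y lx ly : ℝ} (hly : 0 < ly)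
    (hdisj : Disjoint (Ico x (x + lx)) (Ico y (y + ly))) (hxy : x ≤ y) : x + lx ≤ y := by
  by_contra! hlt
  exact hdisj.ne_of_mem ⟨hxy, hlt⟩ ⟨le_rfl, lt_add_of_pos_right y hly⟩ rfl

theorem idle_time_insertion_sound_general
    {ι : Type*} [Fintype ι] [DecidableEq ι]
    (r d B : ι → ℝ)
    (hB : ∀ j, 0 < B j)
    (J : ι) (t s e : ℝ)
    (D : ℝ)
    (hD : D = ∑ j ∈ Finset.univ.filter (fun j => j ≠ J ∧ s ≤ r j ∧ d j ≤ e), B j)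
    (hDpos : 0 < D)
    (hover : e < t + B J + D) :
    ∀ sched : ι → ℝ,
      (∀ j, r j ≤ sched j) →
      (∀ j, sched j + B j ≤ d j) →
      (∀ j k, j ≠ k →
        Disjoint (Set.Ico (sched j) (sched j + B j))
                 (Set.Ico (sched k) (sched k + B k))) →
      t ≤ sched J → s ≤ sched J := by
  intro sched hr hd hdisj htJ
  by_contra! hJs
  set F := Finset.univ.filter (fun j => j ≠ J ∧ s ≤ r j ∧ d j ≤ e)
  -- Each job counted in `D` is released after `J` starts, so it must run after `J` finishes.
  have hpacked : ∀ j ∈ F, Ico (sched j) (sched j + B j) ⊆ Ico (sched J + B J) e := by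
    intro j hj
    obtain ⟨hjJ, hsr, hde⟩ := (Finset.mem_filter.mp hj).2
    have hJj : sched J ≤ sched j := by linarith [hr j]
    exact Ico_subset_Ico (add_le_of_le_of_disjoint_Ico (hB j) (hdisj J j hjJ.symm) hJj)
      ((hd j).trans hde)
  have hDle : D ≤ max (e - (sched J + B J)) 0 :=
    hD ▸ sum_le_of_pairwiseDisjoint_Ico_subset F sched B _ _ (fun j _ => (hB j).le)
      (fun j _ k _ hjk => hdisj j k hjk) hpacked
  rcases le_max_iff.mp hDle with h | h <;> linarith

/-- **Soundness of the idle-time insertion rule.**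
Let `t, s, e` be reals, `J` a job of the job system with `[s, e] ⊆ [t, d J]`,
and let `D` be the sum of the lengths `B j` over all jobs `j ≠ J` with
`s ≤ r j` and `d j ≤ e`.  If `D > 0` and `t + B J + D > e`, then in every
feasible schedule in which `J` starts no earlier than `t`, the start time of
`J` is at least `s`.  Hence deferring the release time of `J` from `t` to `s`
excludes no feasible schedule among those starting `J` at or after `t`. -/
theorem idle_time_insertion_sound
    {ι : Type*} [Fintype ι] [DecidableEq ι]
    (r d B : ι → ℝ)
    (hB : ∀ j, 0 < B j)
    (J : ι) (t s e : ℝ)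
    (hsub : Set.Icc s e ⊆ Set.Icc t (d J))
    (D : ℝ)
    (hD : D = ∑ j ∈ Finset.univ.filter (fun j => j ≠ J ∧ s ≤ r j ∧ d j ≤ e), B j)
    (hDpos : 0 < D)
    (hover : e < t + B J + D) :
    ∀ sched : ι → ℝ,
      (∀ j, r j ≤ sched j) →
      (∀ j, sched j + B j ≤ d j) →
      (∀ j k, j ≠ k →
        Disjoint (Set.Ico (sched j) (sched j + B j))
                 (Set.Ico (sched k) (sched k + B k))) →
      t ≤ sched J → s ≤ sched J :=
  idle_time_insertion_sound_general r d B hB J t s e D hD hDpos hover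
end

section
/- In every feasible schedule of the constructed job system, each blocker job k starts exactly at time 2kM (so it occupies [2kM, (2k+1)M)), and for every partition job i there exists some k with 0 ≤ k ≤ n−1 such that the execution interval [s_i, s_i + x_i) of job i is contained in the free window [(2k+1)M, (2k+2)M). -/
/-- Release times of the constructed job system: blocker `k` is released at
`2kM`, every partition job at `0`. -/
noncomputable def rel (n M : ℕ) : Fin n ⊕ Fin (3 * n) → ℝ :=
  Sum.elim (fun k => ((2 * (k : ℕ) * M : ℕ) : ℝ)) (fun _ => 0)

/-- Deadlines of the constructed job system: blocker `k` has deadline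
`(2k+1)M`, every partition job has deadline `2nM`. -/
noncomputable def dl (n M : ℕ) : Fin n ⊕ Fin (3 * n) → ℝ :=
  Sum.elim (fun k => (((2 * (k : ℕ) + 1) * M : ℕ) : ℝ)) (fun _ => ((2 * n * M : ℕ) : ℝ))

/-- Lengths of the constructed job system: every blocker has length `M`,
partition job `i` has length `x i`. -/
noncomputable def len (n M : ℕ) (x : Fin (3 * n) → ℕ) : Fin n ⊕ Fin (3 * n) → ℝ :=
  Sum.elim (fun _ => (M : ℝ)) (fun i => (x i : ℝ))

/-- A schedule (assignment of start times) of the constructed job system is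
feasible if every job starts at or after its release time, finishes by its
deadline, and the execution intervals of distinct jobs are pairwise
disjoint. -/
def Feasible (n M : ℕ) (x : Fin (3 * n) → ℕ)
    (sched : Fin n ⊕ Fin (3 * n) → ℝ) : Prop :=
  (∀ j, rel n M j ≤ sched j) ∧
  (∀ j, sched j + len n M x j ≤ dl n M j) ∧
  (∀ j k, j ≠ k →
    Disjoint (Set.Ico (sched j) (sched j + len n M x j))
             (Set.Ico (sched k) (sched k + len n M x k)))

/-!
Release time and deadline leave each blocker no slack, so blocker `k` occupies exactly
`[2kM, (2k+1)M)`. A partition job of positive length that starts in `[2kM, (2k+2)M)` must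
then start after blocker `k` ends, and it must end before blocker `k+1` starts, or, when
`k = n-1`, before the common deadline `2nM`.
-/

open Set

section DisjointIco

variable {α : Type*} [LinearOrder α] {a b s t : α}

lemma le_of_disjoint_Ico_of_le (h : Disjoint (Ico s t) (Ico a b)) (hst : s < t) (has : a ≤ s) :
    b ≤ s := by
  rw [Ico_disjoint_Ico, max_eq_left has] at h
  exact (min_le_iff.mp h).resolve_left hst.not_ge

lemma le_of_disjoint_Ico_of_lt (h : Disjoint (Ico s t) (Ico a b)) (hab : a < b) (hsa : s < a) :
    t ≤ a := by
  rw [Ico_disjoint_Ico, max_eq_right hsa.le] at h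
  exact (min_le_iff.mp h).resolve_right hab.not_ge

end DisjointIco

lemma exists_nat_mul_le_lt {c : ℝ} (hc : 0 < c) {s : ℝ} (hs : 0 ≤ s) :
    ∃ k : ℕ, k * c ≤ s ∧ s < (k + 1) * c :=
  ⟨⌊s / c⌋₊, (le_div_iff₀ hc).mp (Nat.floor_le (div_nonneg hs hc.le)),
    (div_lt_iff₀ hc).mp (Nat.lt_floor_add_one _)⟩

lemma exists_gap_of_disjoint_blocks {n : ℕ} {M s x : ℝ} (hx : 0 < x) (hs : 0 ≤ s)
    (hend : s + x ≤ 2 * n * M)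
    (hdisj : ∀ k < n, Disjoint (Ico s (s + x)) (Ico (2 * k * M) (2 * k * M + M))) :
    ∃ k < n, (2 * k + 1) * M ≤ s ∧ s + x ≤ (2 * k + 2) * M := by
  have hM : 0 < M := by
    by_contra! hM
    nlinarith [(Nat.cast_nonneg n : (0 : ℝ) ≤ n)]
  obtain ⟨k, hks, hsk⟩ := exists_nat_mul_le_lt (by positivity : 0 < 2 * M) hs
  have hkn : k < n := by
    by_contra! hnk
    have : (n : ℝ) ≤ k := by exact_mod_cast hnk
    nlinarith
  have hstart : (2 * k + 1) * M ≤ s := by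
    have := le_of_disjoint_Ico_of_le (hdisj k hkn) (by linarith) (by linarith)
    linarith
  refine ⟨k, hkn, hstart, ?_⟩
  rcases (Nat.succ_le_of_lt hkn).lt_or_eq with hk1 | hk1
  · have := le_of_disjoint_Ico_of_lt (hdisj (k + 1) hk1) (by linarith) (by push_cast; linarith)
    push_cast at this
    linarith
  · have : (n : ℝ) = k + 1 := by exact_mod_cast hk1.symm
    rw [this] at hend
    linarith

namespace Feasible

variable {n M : ℕ} {x : Fin (3 * n) → ℕ} {sched : Fin n ⊕ Fin (3 * n) → ℝ}

lemma blocker_start (h : Feasible n M x sched) (k : Fin n) :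
    sched (Sum.inl k) = ((2 * (k : ℕ) * M : ℕ) : ℝ) := by
  have hr := h.1 (Sum.inl k)
  have hd := h.2.1 (Sum.inl k)
  simp only [rel, dl, len, Sum.elim_inl] at hr hd
  push_cast at hr hd ⊢
  linarith

lemma disjoint_blocker (h : Feasible n M x sched) (i : Fin (3 * n)) (k : Fin n) :
    Disjoint (Ico (sched (Sum.inr i)) (sched (Sum.inr i) + x i))
      (Ico (2 * (k : ℕ) * M : ℝ) (2 * (k : ℕ) * M + M)) := by
  have := h.2.2 (Sum.inr i) (Sum.inl k) Sum.inr_ne_inl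
  simp only [len, Sum.elim_inl, Sum.elim_inr, h.blocker_start k] at this
  push_cast at this
  exact this

end Feasible

theorem feasible_schedule_structure_general
    (n M : ℕ)
    (x : Fin (3 * n) → ℕ) (hx : ∀ i, 0 < x i)
    (sched : Fin n ⊕ Fin (3 * n) → ℝ)
    (hfeas : Feasible n M x sched) :
    (∀ k : Fin n, sched (Sum.inl k) = ((2 * (k : ℕ) * M : ℕ) : ℝ)) ∧
    (∀ i : Fin (3 * n), ∃ k : Fin n,
      Set.Ico (sched (Sum.inr i)) (sched (Sum.inr i) + (x i : ℝ)) ⊆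
        Set.Ico ((((2 * (k : ℕ) + 1) * M : ℕ) : ℝ)) ((((2 * (k : ℕ) + 2) * M : ℕ) : ℝ))) := by
  refine ⟨hfeas.blocker_start, fun i => ?_⟩
  have hr := hfeas.1 (Sum.inr i)
  have hd := hfeas.2.1 (Sum.inr i)
  simp only [rel, dl, len, Sum.elim_inr] at hr hd
  push_cast at hd
  obtain ⟨k, hkn, hstart, hend⟩ := exists_gap_of_disjoint_blocks (by exact_mod_cast hx i) hr hd
    fun k hk => hfeas.disjoint_blocker i ⟨k, hk⟩
  exact ⟨⟨k, hkn⟩, Ico_subset_Ico (by push_cast; exact hstart) (by push_cast; exact hend)⟩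

/-- **Structure of feasible schedules of the constructed job system.**
In every feasible schedule, each blocker job `k` starts exactly at time `2kM`
(so it occupies `[2kM, (2k+1)M)`), and for every partition job `i` there is
some `k` (with `0 ≤ k ≤ n-1`) such that the execution interval
`[sched i, sched i + x i)` of job `i` is contained in the free window
`[(2k+1)M, (2k+2)M)`. -/
theorem feasible_schedule_structure
    (n M : ℕ) (hn : 0 < n) (hM : 0 < M)
    (x : Fin (3 * n) → ℕ) (hx : ∀ i, 0 < x i)
    (hlow : ∀ i, M < 4 * x i) (hhigh : ∀ i, 2 * x i < M)
    (hsum : ∑ i, x i = n * M)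
    (sched : Fin n ⊕ Fin (3 * n) → ℝ)
    (hfeas : Feasible n M x sched) :
    (∀ k : Fin n, sched (Sum.inl k) = ((2 * (k : ℕ) * M : ℕ) : ℝ)) ∧
    (∀ i : Fin (3 * n), ∃ k : Fin n,
      Set.Ico (sched (Sum.inr i)) (sched (Sum.inr i) + (x i : ℝ)) ⊆
        Set.Ico ((((2 * (k : ℕ) + 1) * M : ℕ) : ℝ)) ((((2 * (k : ℕ) + 2) * M : ℕ) : ℝ))) :=
  feasible_schedule_structure_general n M x hx sched hfeas
end

section
/- Forward direction of the reduction: if there exists a partition of the index set {1, …, 3n} into n subsets A_1, …, A_n with ∑_{i ∈ A_k} x_i = M for every k, then the constructed job system admits a feasible schedule; specifically, a feasible schedule exists in which (after reindexing k from 0) each blocker k occupies [2kM, (2k+1)M) and the jobs of each group A_k are scheduled consecutively so as to exactly fill the window [(2k+1)M, (2k+2)M). -/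
noncomputable def offR {ι : Type*} [LinearOrder ι] (x : ι → ℕ) (S : Finset ι) (i : ι) : ℝ :=
  ∑ j ∈ S.filter (fun j => j < i), (x j : ℝ)

lemma offR_nonneg {ι : Type*} [LinearOrder ι] (x : ι → ℕ) (S : Finset ι) (i : ι) :
    0 ≤ offR x S i :=
  Finset.sum_nonneg fun j _ => Nat.cast_nonneg _

lemma offR_add_le_offR {ι : Type*} [LinearOrder ι] (x : ι → ℕ) (S : Finset ι)
    {i j : ι} (hi : i ∈ S) (hij : i < j) :
    offR x S i + x i ≤ offR x S j := by
  classical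
  have hnot : i ∉ S.filter (fun j => j < i) := by simp
  have hsub : insert i (S.filter (fun k => k < i)) ⊆ S.filter (fun k => k < j) := by
    intro a ha
    rcases Finset.mem_insert.mp ha with rfl | ha
    · exact Finset.mem_filter.mpr ⟨hi, hij⟩
    · rcases Finset.mem_filter.mp ha with ⟨haS, hai⟩
      exact Finset.mem_filter.mpr ⟨haS, hai.trans hij⟩
  calc offR x S i + x i = ∑ k ∈ insert i (S.filter (fun k => k < i)), (x k : ℝ) := by
        rw [Finset.sum_insert hnot, offR]; ring
    _ ≤ ∑ k ∈ S.filter (fun k => k < j), (x k : ℝ) :=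
        Finset.sum_le_sum_of_subset_of_nonneg hsub (fun k _ _ => Nat.cast_nonneg _)
    _ = offR x S j := rfl

lemma offR_add_le_sum {ι : Type*} [LinearOrder ι] (x : ι → ℕ) (S : Finset ι)
    {i : ι} (hi : i ∈ S) :
    offR x S i + x i ≤ ∑ j ∈ S, (x j : ℝ) := by
  classical
  have hnot : i ∉ S.filter (fun j => j < i) := by simp
  have hsub : insert i (S.filter (fun j => j < i)) ⊆ S := by
    intro a ha
    rcases Finset.mem_insert.mp ha with rfl | ha
    · exact hi
    · exact (Finset.mem_filter.mp ha).1
  calc offR x S i + x i = ∑ j ∈ insert i (S.filter (fun j => j < i)), (x j : ℝ) := by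
        rw [Finset.sum_insert hnot, offR]; ring
    _ ≤ ∑ j ∈ S, (x j : ℝ) :=
        Finset.sum_le_sum_of_subset_of_nonneg hsub (fun j _ _ => Nat.cast_nonneg _)

lemma consec_union {ι : Type*} [LinearOrder ι] (x : ι → ℕ) (S : Finset ι) (a : ℝ) :
    (⋃ i ∈ S, Set.Ico (a + offR x S i) (a + offR x S i + x i)) =
      Set.Ico a (a + ∑ j ∈ S, (x j : ℝ)) := by
  classical
  induction S using Finset.induction_on_max with
  | empty => simp
  | insert b S hb ih =>
    have hbS : b ∉ S := fun h => lt_irrefl b (hb b h)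
    have h1 : ∀ i ∈ S, offR x (insert b S) i = offR x S i := by
      intro i hi
      unfold offR
      rw [Finset.filter_insert, if_neg (not_lt.mpr (hb i hi).le)]
    have h2 : offR x (insert b S) b = ∑ j ∈ S, (x j : ℝ) := by
      unfold offR
      rw [Finset.filter_insert, if_neg (lt_irrefl b),
        Finset.filter_true_of_mem (fun j hj => hb j hj)]
    have hsn : (0:ℝ) ≤ ∑ j ∈ S, (x j : ℝ) := Finset.sum_nonneg fun j _ => Nat.cast_nonneg _
    rw [Finset.set_biUnion_insert, h2, Finset.sum_insert hbS]
    have h3 : (⋃ i ∈ S, Set.Ico (a + offR x (insert b S) i) (a + offR x (insert b S) i + x i))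
        = ⋃ i ∈ S, Set.Ico (a + offR x S i) (a + offR x S i + x i) := by
      apply Set.iUnion₂_congr
      intro i hi
      rw [h1 i hi]
    rw [h3, ih, Set.union_comm]
    have he : a + ((x b : ℝ) + ∑ j ∈ S, (x j : ℝ)) = a + ∑ j ∈ S, (x j : ℝ) + x b := by ring
    rw [he]
    exact Set.Ico_union_Ico_eq_Ico (by linarith) (by have : (0:ℝ) ≤ (x b : ℝ) := Nat.cast_nonneg _; linarith)

lemma consec_disjoint {ι : Type*} [LinearOrder ι] (x : ι → ℕ) (S : Finset ι) (a : ℝ)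
    {i j : ι} (hi : i ∈ S) (hj : j ∈ S) (hij : i ≠ j) :
    Disjoint (Set.Ico (a + offR x S i) (a + offR x S i + x i))
      (Set.Ico (a + offR x S j) (a + offR x S j + x j)) := by
  rcases hij.lt_or_gt with h | h
  · refine Set.Ico_disjoint_Ico.mpr ?_
    have := offR_add_le_offR x S hi h
    calc min (a + offR x S i + x i) (a + offR x S j + x j)
        ≤ a + offR x S i + x i := min_le_left _ _
      _ ≤ a + offR x S j := by linarith
      _ ≤ max (a + offR x S i) (a + offR x S j) := le_max_right _ _
  · refine Set.Ico_disjoint_Ico.mpr ?_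
    have := offR_add_le_offR x S hj h
    calc min (a + offR x S i + x i) (a + offR x S j + x j)
        ≤ a + offR x S j + x j := min_le_right _ _
      _ ≤ a + offR x S i := by linarith
      _ ≤ max (a + offR x S i) (a + offR x S j) := le_max_left _ _

lemma window_disjoint (M : ℝ) (hM : 0 ≤ M) {u v : ℕ} (huv : u ≠ v) :
    Disjoint (Set.Ico ((u:ℝ) * M) (((u:ℝ) + 1) * M))
      (Set.Ico ((v:ℝ) * M) (((v:ℝ) + 1) * M)) := by
  rcases huv.lt_or_gt with h | h
  · have hc : ((u:ℝ) + 1) ≤ v := by exact_mod_cast h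
    refine Set.Ico_disjoint_Ico.mpr ?_
    calc min (((u:ℝ) + 1) * M) (((v:ℝ) + 1) * M) ≤ ((u:ℝ) + 1) * M := min_le_left _ _
      _ ≤ (v:ℝ) * M := by nlinarith
      _ ≤ max ((u:ℝ) * M) ((v:ℝ) * M) := le_max_right _ _
  · have hc : ((v:ℝ) + 1) ≤ u := by exact_mod_cast h
    refine Set.Ico_disjoint_Ico.mpr ?_
    calc min (((u:ℝ) + 1) * M) (((v:ℝ) + 1) * M) ≤ ((v:ℝ) + 1) * M := min_le_right _ _
      _ ≤ (u:ℝ) * M := by nlinarith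
      _ ≤ max ((u:ℝ) * M) ((v:ℝ) * M) := le_max_left _ _
/-- **Forward direction of the reduction.**
If the index set of the 3-Partition instance can be partitioned into `n`
subsets `A k`, each summing to `M`, then the constructed job system admits a
feasible schedule; specifically, there is a feasible schedule in which each
blocker `k` starts at `2kM` (occupying `[2kM, (2k+1)M)`) and the jobs of
each group `A k` exactly fill the free window `[(2k+1)M, (2k+2)M)`. -/
theorem feasible_of_three_partition
    (n M : ℕ) (hn : 0 < n) (hM : 0 < M)
    (x : Fin (3 * n) → ℕ) (hx : ∀ i, 0 < x i)
    (hlow : ∀ i, M < 4 * x i) (hhigh : ∀ i, 2 * x i < M)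
    (hsum : ∑ i, x i = n * M)
    (A : Fin n → Finset (Fin (3 * n)))
    (hpart : ∀ i : Fin (3 * n), ∃! k : Fin n, i ∈ A k)
    (hA : ∀ k : Fin n, ∑ i ∈ A k, x i = M) :
    ∃ sched : Fin n ⊕ Fin (3 * n) → ℝ,
      Feasible n M x sched ∧
      (∀ k : Fin n, sched (Sum.inl k) = ((2 * (k : ℕ) * M : ℕ) : ℝ)) ∧
      (∀ k : Fin n,
        (⋃ i ∈ A k, Set.Ico (sched (Sum.inr i)) (sched (Sum.inr i) + (x i : ℝ))) =
          Set.Ico ((((2 * (k : ℕ) + 1) * M : ℕ) : ℝ)) ((((2 * (k : ℕ) + 2) * M : ℕ) : ℝ))) := by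
  classical
  have hpart' : ∀ i, ∃ k, i ∈ A k ∧ ∀ y, i ∈ A y → y = k := hpart
  choose K hK1 hK2 using hpart'
  set W : Fin n → ℝ := fun k => (((2 * (k : ℕ) + 1) * M : ℕ) : ℝ) with hWdef
  have hWval : ∀ k : Fin n, W k = (2 * (k : ℝ) + 1) * M := by
    intro k; simp only [hWdef]; push_cast; ring
  have hAk : ∀ k : Fin n, ∑ i ∈ A k, (x i : ℝ) = (M : ℝ) := by
    intro k; exact_mod_cast congrArg (Nat.cast : ℕ → ℝ) (hA k)
  set sched : Fin n ⊕ Fin (3 * n) → ℝ :=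
    Sum.elim (fun k => ((2 * (k : ℕ) * M : ℕ) : ℝ))
      (fun i => W (K i) + offR x (A (K i)) i) with hsched
  set w : Fin n ⊕ Fin (3 * n) → ℕ :=
    Sum.elim (fun k => 2 * (k : ℕ)) (fun i => 2 * (K i : ℕ) + 1) with hwdef
  have hMpos : (0:ℝ) < M := by exact_mod_cast hM
  have hwin : ∀ j, Set.Ico (sched j) (sched j + len n M x j) ⊆
      Set.Ico ((w j : ℝ) * M) (((w j : ℝ) + 1) * M) := by
    rintro (k | i)
    · have h2 : sched (Sum.inl k) + len n M x (Sum.inl k) = ((w (Sum.inl k) : ℝ) + 1) * M := by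
        show ((2 * (k : ℕ) * M : ℕ) : ℝ) + (M : ℝ) = (((2 * (k : ℕ) : ℕ) : ℝ) + 1) * M
        push_cast; ring
      have h1 : sched (Sum.inl k) = ((w (Sum.inl k) : ℝ)) * M := by
        show ((2 * (k : ℕ) * M : ℕ) : ℝ) = (((2 * (k : ℕ) : ℕ) : ℝ)) * M
        push_cast; ring
      rw [h2, h1]
    · have hoff : 0 ≤ offR x (A (K i)) i := offR_nonneg _ _ _
      have hle : offR x (A (K i)) i + x i ≤ (M : ℝ) := by
        have := offR_add_le_sum x (A (K i)) (hK1 i)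
        rwa [hAk] at this
      have hW1 : W (K i) = ((w (Sum.inr i) : ℝ)) * M := by
        rw [hWval]; simp only [hwdef, Sum.elim_inr]; push_cast; ring
      apply Set.Ico_subset_Ico
      · simp only [hsched, Sum.elim_inr]; rw [hW1] at *; linarith
      · simp only [hsched, Sum.elim_inr, len]
        rw [hW1]
        have : ((w (Sum.inr i) : ℝ) + 1) * M = (w (Sum.inr i) : ℝ) * M + M := by ring
        rw [this]; linarith
  refine ⟨sched, ⟨?_, ?_, ?_⟩, ?_, ?_⟩
  · rintro (k | i)
    · simp [rel, hsched]
    · simp only [rel, Sum.elim_inr, hsched]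
      have := offR_nonneg x (A (K i)) i
      have : (0:ℝ) ≤ W (K i) := by rw [hWval]; positivity
      have := offR_nonneg x (A (K i)) i
      linarith
  · rintro (k | i)
    · simp only [dl, len, Sum.elim_inl, hsched]
      push_cast; ring_nf; exact le_rfl
    · simp only [dl, len, Sum.elim_inr, hsched]
      have hle : offR x (A (K i)) i + x i ≤ (M : ℝ) := by
        have := offR_add_le_sum x (A (K i)) (hK1 i)
        rwa [hAk] at this
      have hk : (K i : ℕ) + 1 ≤ n := (K i).isLt
      have hk' : ((K i : ℕ) : ℝ) + 1 ≤ (n : ℝ) := by exact_mod_cast hk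
      rw [hWval]
      push_cast
      nlinarith
  · rintro (k | i) (l | j) hne
    · have hkl : k ≠ l := by simpa using hne
      have hw : w (Sum.inl k) ≠ w (Sum.inl l) := by
        simp only [hwdef, Sum.elim_inl]
        intro h
        exact hkl (Fin.ext (by omega))
      exact (window_disjoint M hMpos.le hw).mono (hwin _) (hwin _)
    · have hw : w (Sum.inl k) ≠ w (Sum.inr j) := by
        simp only [hwdef, Sum.elim_inl, Sum.elim_inr]; omega
      exact (window_disjoint M hMpos.le hw).mono (hwin _) (hwin _)
    · have hw : w (Sum.inr i) ≠ w (Sum.inl l) := by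
        simp only [hwdef, Sum.elim_inl, Sum.elim_inr]; omega
      exact (window_disjoint M hMpos.le hw).mono (hwin _) (hwin _)
    · have hij : i ≠ j := by simpa using hne
      by_cases hKij : K i = K j
      · simp only [hsched, Sum.elim_inr, len, hKij]
        exact consec_disjoint x (A (K j)) (W (K j)) (hKij ▸ hK1 i) (hK1 j) hij
      · have hw : w (Sum.inr i) ≠ w (Sum.inr j) := by
          simp only [hwdef, Sum.elim_inr]
          intro h
          exact hKij (Fin.ext (by omega))
        exact (window_disjoint M hMpos.le hw).mono (hwin _) (hwin _)
  · intro k; rfl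
  · intro k
    have hKk : ∀ i ∈ A k, K i = k := fun i hi => (hK2 i k hi).symm
    have h1 : (⋃ i ∈ A k, Set.Ico (sched (Sum.inr i)) (sched (Sum.inr i) + (x i : ℝ))) =
        ⋃ i ∈ A k, Set.Ico (W k + offR x (A k) i) (W k + offR x (A k) i + x i) := by
      apply Set.iUnion₂_congr
      intro i hi
      simp only [hsched, Sum.elim_inr, hKk i hi]
    rw [h1, consec_union x (A k) (W k), hAk k]
    have h2 : W k + (M : ℝ) = (((2 * (k : ℕ) + 2) * M : ℕ) : ℝ) := by
      rw [hWval]; push_cast; ring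
    rw [h2]
end
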